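/- arXiv:2302.12112 — 8 statements merged into one kernel-verified Lean document; each statement's English description precedes it below -/
import Mathlib

section
/- Let C be a set with at least two elements and let f : Cⁿ → C be a function preserving the relation OR(=_C, =_C) := {(a,a',b,b') ∈ C⁴ : a = a' ∨ b = b'}. Then f depends on at most one coordinate, i.e., there is at most one index i such that changing only the i-th argument can change the value of f. -/
theorem stmt1_general {C : Type*} (n : ℕ) (f : (Fin n → C) → C)
    (hf : ∀ p q r s : Fin n → C, (∀ i, p i = q i ∨ r i = s i) →
      (f p = f q ∨ f r = f s)) :
    ∀ i j : Fin n,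
      (∃ x y : Fin n → C, (∀ l, l ≠ i → x l = y l) ∧ f x ≠ f y) →
      (∃ x y : Fin n → C, (∀ l, l ≠ j → x l = y l) ∧ f x ≠ f y) →
      i = j := by
  rintro i j ⟨x, y, hxy, hfxy⟩ ⟨u, v, huv, hfuv⟩
  by_contra hij
  have hrel : ∀ l, x l = y l ∨ u l = v l := fun l => by
    by_cases hl : l = i
    · exact Or.inr (huv l (hl ▸ hij))
    · exact Or.inl (hxy l hl)
  exact (hf x y u v hrel).elim hfxy hfuv

/-- A function preserving OR(=,=) on a set with at least two elements depends
on at most one coordinate. -/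
theorem stmt1 {C : Type*} (htwo : ∃ a b : C, a ≠ b) (n : ℕ) (f : (Fin n → C) → C)
    (hf : ∀ p q r s : Fin n → C, (∀ i, p i = q i ∨ r i = s i) →
      (f p = f q ∨ f r = f s)) :
    ∀ i j : Fin n,
      (∃ x y : Fin n → C, (∀ l, l ≠ i → x l = y l) ∧ f x ≠ f y) →
      (∃ x y : Fin n → C, (∀ l, l ≠ j → x l = y l) ∧ f x ≠ f y) →
      i = j :=
  stmt1_general n f hf
end

section
/- Let R ⊆ Aⁿ (n ≥ 3) be a totally symmetric, totally reflexive relation satisfying R = R↑ⁿ, where R↑ⁿ(x₁,...,xₙ) := ∃y, ⋀_{1≤i₁<...<i_{n-1}≤n} R(y, x_{i₁},...,x_{i_{n-1}}). Then the binary relation α = {(a,a') : ∀a₃,...,aₙ, (a,a',a₃,...,aₙ) ∈ R} is an equivalence relation on A. -/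
theorem Fin.removeNth_succ_cons {n : ℕ} {α : Type*} (j : Fin (n + 1)) (x : α)
    (u : Fin (n + 1) → α) :
    j.succ.removeNth (Fin.cons x u : Fin (n + 2) → α) = Fin.cons x (j.removeNth u) := by
  ext k
  cases k using Fin.cases <;> simp [Fin.removeNth, Fin.succ_succAbove_succ]

theorem Fin.cons_cons_comp_swap_zero_one {n : ℕ} {α : Type*} (a b : α) (s : Fin n → α) :
    (Fin.cons a (Fin.cons b s) : Fin (n + 2) → α) ∘ Equiv.swap 0 1 =
      Fin.cons b (Fin.cons a s) := by
  ext k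
  refine Fin.cases ?_ (Fin.cases ?_ fun j => ?_) k
  · simp
  · simp
  · have hj : (j.succ.succ : Fin (n + 2)) ≠ 1 := (Fin.succ_injective _).ne (Fin.succ_ne_zero j)
    simp [Equiv.swap_apply_of_ne_of_ne (Fin.succ_ne_zero _) hj]

theorem stmt3_general {A : Type*} (m : ℕ) (R : (Fin (m + 3) → A) → Prop)
    (hsym : ∀ (σ : Equiv.Perm (Fin (m + 3))) (t : Fin (m + 3) → A), R t → R (t ∘ σ))
    (hrefl : ∀ t : Fin (m + 3) → A, (∃ i j, i ≠ j ∧ t i = t j) → R t)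
    (hfix : ∀ t : Fin (m + 3) → A,
      R t ↔ ∃ y : A, ∀ i : Fin (m + 3), R (Fin.cons y (i.removeNth t))) :
    Equivalence (fun a a' : A =>
      ∀ t : Fin (m + 1) → A, R (Fin.cons a (Fin.cons a' t))) := by
  have hswap : ∀ a b s, R (Fin.cons a (Fin.cons b s)) → R (Fin.cons b (Fin.cons a s)) :=
    fun a b s h => Fin.cons_cons_comp_swap_zero_one a b s ▸ hsym (Equiv.swap 0 1) _ h
  refine ⟨fun a t => hrefl _ ⟨0, 1, by simp, by simp⟩, fun hab t => hswap _ _ t (hab t), ?_⟩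
  intro a b c hab hbc t
  -- `(a, c, t) ∈ R↑` with witness `b`: deleting `a` leaves `(b, c, t)`, and deleting any
  -- other entry leaves a tuple `(b, a, …)`.
  refine (hfix _).2 ⟨b, Fin.cases ?_ fun j => ?_⟩
  · simpa using hbc t
  · rw [Fin.removeNth_succ_cons]
    exact hswap _ _ _ (hab _)

/-- If a totally symmetric totally reflexive relation `R` of arity `n ≥ 3`
satisfies `R = R↑ⁿ`, then the associated binary relation `α` is an equivalence
relation. -/
theorem stmt3 {A : Type*} [Fintype A] (m : ℕ) (R : (Fin (m + 3) → A) → Prop)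
    (hsym : ∀ (σ : Equiv.Perm (Fin (m + 3))) (t : Fin (m + 3) → A), R t → R (t ∘ σ))
    (hrefl : ∀ t : Fin (m + 3) → A, (∃ i j, i ≠ j ∧ t i = t j) → R t)
    (hfix : ∀ t : Fin (m + 3) → A,
      R t ↔ ∃ y : A, ∀ i : Fin (m + 3), R (Fin.cons y (i.removeNth t))) :
    Equivalence (fun a a' : A =>
      ∀ t : Fin (m + 1) → A, R (Fin.cons a (Fin.cons a' t))) :=
  stmt3_general m R hsym hrefl hfix
end

section
/- Let U be a finite loopless non-bipartite graph in which every proper tree-definable subset S ⊊ U induces a bipartite subgraph, and suppose U contains a triangle. Then any two vertices of U have a common neighbor. -/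
inductive TreeDef {U : Type*} (adj : U → U → Prop) : Set U → Prop
  | univ : TreeDef adj Set.univ
  | singleton (u : U) : TreeDef adj {u}
  | nbr {B : Set U} : TreeDef adj B → TreeDef adj {v | ∃ u ∈ B, adj u v}
  | inter {B₁ B₂ : Set U} : TreeDef adj B₁ → TreeDef adj B₂ → TreeDef adj (B₁ ∩ B₂)

/-!
No two-colouring is proper on a triangle, so under the hypothesis every tree-definable set
containing a triangle is all of `U`. The second neighbourhood `N²(x) = {v | Comp adj adj x v}`
is tree-definable, and when `x` lies on a triangle `xyz` it contains `x, y, z`; hence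
`N²(x) = U` for each corner `x` of the triangle `abc`. By symmetry `a, b, c ∈ N²(u)` for every
vertex `u`, so `N²(u) = U` as well, which is the claim.
-/

open Relation

theorem Bool.false_of_pairwise_ne {x y z : Bool} (hxy : x ≠ y) (hyz : y ≠ z) (hxz : x ≠ z) :
    False := by
  cases x <;> cases y <;> cases z <;> simp_all

namespace TreeDef

variable {U : Type*} {adj : U → U → Prop}

theorem setOf_comp (x : U) : TreeDef adj {v | Comp adj adj x v} := by
  convert nbr (nbr (singleton (adj := adj) x)) using 1
  ext v
  simp [Comp]

variable (hbip : ∀ S : Set U, TreeDef adj S → S ≠ Set.univ →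
  ∃ f : U → Bool, ∀ a ∈ S, ∀ b ∈ S, adj a b → f a ≠ f b)
include hbip

theorem eq_univ_of_triangle {S : Set U} (hS : TreeDef adj S) {a b c : U}
    (ha : a ∈ S) (hb : b ∈ S) (hc : c ∈ S) (hab : adj a b) (hbc : adj b c) (hac : adj a c) :
    S = Set.univ := by
  by_contra hne
  obtain ⟨f, hf⟩ := hbip S hS hne
  exact Bool.false_of_pairwise_ne (hf a ha b hb hab) (hf b hb c hc hbc) (hf a ha c hc hac)

theorem comp_self_of_comp_self_triangle {x a b c : U}
    (ha : Comp adj adj x a) (hb : Comp adj adj x b) (hc : Comp adj adj x c)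
    (hab : adj a b) (hbc : adj b c) (hac : adj a c) (v : U) : Comp adj adj x v := by
  have h := eq_univ_of_triangle hbip (setOf_comp x) ha hb hc hab hbc hac
  exact (Set.eq_univ_iff_forall.mp h v :)

theorem comp_self_of_triangle (hsym : Symmetric adj) {x y z : U}
    (hxy : adj x y) (hyz : adj y z) (hxz : adj x z) (v : U) : Comp adj adj x v :=
  comp_self_of_comp_self_triangle hbip ⟨y, hxy, hsym hxy⟩ ⟨z, hxz, hsym hyz⟩ ⟨y, hxy, hyz⟩
    hxy hyz hxz v

end TreeDef

theorem stmt7_general {U : Type*} (adj : U → U → Prop)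
    (hsym : Symmetric adj)
    (htri : ∃ a b c : U, adj a b ∧ adj b c ∧ adj a c)
    (hbip : ∀ S : Set U, TreeDef adj S → S ≠ Set.univ →
      ∃ f : U → Bool, ∀ a ∈ S, ∀ b ∈ S, adj a b → f a ≠ f b) :
    ∀ u u' : U, ∃ w, adj u w ∧ adj u' w := by
  obtain ⟨a, b, c, hab, hbc, hac⟩ := htri
  have comp_symm {x y : U} (h : Comp adj adj x y) : Comp adj adj y x :=
    let ⟨w, hxw, hwy⟩ := h; ⟨w, hsym hwy, hsym hxw⟩
  intro u u'
  have ha := comp_symm (TreeDef.comp_self_of_triangle hbip hsym hab hbc hac u)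
  have hb := comp_symm (TreeDef.comp_self_of_triangle hbip hsym hbc (hsym hac) (hsym hab) u)
  have hc := comp_symm (TreeDef.comp_self_of_triangle hbip hsym (hsym hac) hab (hsym hbc) u)
  obtain ⟨w, huw, hwu'⟩ :=
    TreeDef.comp_self_of_comp_self_triangle hbip ha hb hc hab hbc hac u'
  exact ⟨w, huw, hsym hwu'⟩

/-- In a finite loopless non-bipartite graph containing a triangle where every
proper tree-definable subset induces a bipartite subgraph, any two vertices
have a common neighbour. -/
theorem stmt7 {U : Type*} [Fintype U] (adj : U → U → Prop)
    (hsym : Symmetric adj) (hloop : ∀ u, ¬ adj u u)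
    (hnonbip : ¬ ∃ f : U → Bool, ∀ a b, adj a b → f a ≠ f b)
    (htri : ∃ a b c : U, adj a b ∧ adj b c ∧ adj a c)
    (hbip : ∀ S : Set U, TreeDef adj S → S ≠ Set.univ →
      ∃ f : U → Bool, ∀ a ∈ S, ∀ b ∈ S, adj a b → f a ≠ f b) :
    ∀ u u' : U, ∃ w, adj u w ∧ adj u' w :=
  stmt7_general adj hsym htri hbip
end

section
/- Let (U, —) be a finite graph, and let U₀, U₁, U₂ ⊆ U be independent sets such that U_j ⊆ U_i^— for all i ≠ j (every vertex of U_j has a neighbor in U_i), and such that the induced subgraph on U₀ ∪ U₁ is connected. Define U₀' := U₁^— ∩ U₂^—. Suppose additionally that every proper subset of U of the form obtained by intersecting neighborhoods of the Uᵢ induces a bipartite subgraph whenever it is a proper subset of U, and U₂^— ≠ U. Then U₀ ⊆ U₀', every vertex of U₀' is adjacent to a vertex of U₁, the induced subgraph on U₀' ∪ U₁ is connected, and U₀' is independent. -/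
/-!
Since `U₀ ∪ U₁ ⊆ U₂^— ≠ U`, the set `U₂^—` carries a proper 2-colouring `f`. The connected
set `U₀ ∪ U₁` is bipartite with sides `U₀` and `U₁`, and a 2-colouring of a connected graph is
unique up to swapping the colours, so `f` is constant on `U₁`. Every vertex of
`U₀' = U₁^— ∩ U₂^—` is adjacent to `U₁`, hence gets the other colour, so no two of them are
adjacent. Connectivity of `U₀' ∪ U₁` holds because each vertex of `U₀'` hangs off `U₁`.
-/

/-- The neighbourhood of a set of vertices in a graph. -/
def nbr {U : Type*} (adj : U → U → Prop) (B : Set U) : Set U :=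
  {v | ∃ u ∈ B, adj u v}

/-- The family of subsets obtained from the neighbourhoods of the three given
sets by intersections. -/
inductive NbrInter {U : Type*} (adj : U → U → Prop) (U0 U1 U2 : Set U) : Set U → Prop
  | n0 : NbrInter adj U0 U1 U2 (nbr adj U0)
  | n1 : NbrInter adj U0 U1 U2 (nbr adj U1)
  | n2 : NbrInter adj U0 U1 U2 (nbr adj U2)
  | inter {B₁ B₂ : Set U} : NbrInter adj U0 U1 U2 B₁ → NbrInter adj U0 U1 U2 B₂ →
      NbrInter adj U0 U1 U2 (B₁ ∩ B₂)

/-- Connectivity of the subgraph induced on a set `S`. -/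
def connOn {U : Type*} (adj : U → U → Prop) (S : Set U) : Prop :=
  ∀ a ∈ S, ∀ b ∈ S,
    Relation.ReflTransGen (fun x y => x ∈ S ∧ y ∈ S ∧ adj x y) a b

/-- Independence of a set of vertices. -/
def indep {U : Type*} (adj : U → U → Prop) (S : Set U) : Prop :=
  ∀ a ∈ S, ∀ b ∈ S, ¬ adj a b

section Graph

variable {U : Type*} {adj : U → U → Prop}

def IsTwoColoringOn (adj : U → U → Prop) (S : Set U) (f : U → Bool) : Prop :=
  ∀ a ∈ S, ∀ b ∈ S, adj a b → f a ≠ f b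

lemma IsTwoColoringOn.mono {S T : Set U} {f : U → Bool} (hf : IsTwoColoringOn adj S f)
    (hTS : T ⊆ S) : IsTwoColoringOn adj T f :=
  fun a ha b hb => hf a (hTS ha) b (hTS hb)

lemma nbr_mono {A B : Set U} (h : A ⊆ B) : nbr adj A ⊆ nbr adj B :=
  fun _ ⟨u, hu, huv⟩ => ⟨u, h hu, huv⟩

lemma disjoint_of_subset_nbr_of_indep {A B : Set U} (hA : A ⊆ nbr adj B) (hB : indep adj B) :
    Disjoint A B :=
  Set.disjoint_left.2 fun _ hvA hvB =>
    let ⟨u, hu, huv⟩ := hA hvA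
    hB u hu _ hvB huv

lemma connOn_of_subset_union_nbr (hsym : Symmetric adj) {S T : Set U} (hT : connOn adj T)
    (hTS : T ⊆ S) (hST : S ⊆ T ∪ nbr adj T) : connOn adj S := by
  let R := fun x y => x ∈ S ∧ y ∈ S ∧ adj x y
  have : Std.Symm R := ⟨fun _ _ ⟨hx, hy, hxy⟩ => ⟨hy, hx, hsym hxy⟩⟩
  have reach_T : ∀ c ∈ S, ∃ t ∈ T, Relation.ReflTransGen R c t := by
    intro c hc
    rcases hST hc with hcT | ⟨t, ht, htc⟩
    · exact ⟨c, hcT, .refl⟩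
    · exact ⟨t, ht, .single ⟨hc, hTS ht, hsym htc⟩⟩
  intro a ha b hb
  obtain ⟨t, ht, hat⟩ := reach_T a ha
  obtain ⟨t', ht', hbt'⟩ := reach_T b hb
  have htt' : Relation.ReflTransGen R t t' :=
    Relation.ReflTransGen.mono (p := R) (fun _ _ ⟨hx, hy, hxy⟩ => ⟨hTS hx, hTS hy, hxy⟩) _ _
      (hT t ht t' ht')
  exact hat.trans (htt'.trans (Relation.ReflTransGen.stdSymm.symm _ _ hbt'))

lemma isTwoColoringOn_union_of_indep {A B : Set U} [DecidablePred (· ∈ B)]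
    (hA : indep adj A) (hB : indep adj B) (hAB : Disjoint A B) :
    IsTwoColoringOn adj (A ∪ B) fun x => decide (x ∈ B) := by
  have hA' : ∀ x ∈ A, x ∉ B := fun _ hx => Set.disjoint_left.1 hAB hx
  rintro a (ha | ha) b (hb | hb) hab
  · exact (hA a ha b hb hab).elim
  · simp [hA' a ha, hb]
  · simp [ha, hA' b hb]
  · exact (hB a ha b hb hab).elim

lemma IsTwoColoringOn.eq_iff_eq_of_connOn {S : Set U} {f g : U → Bool}
    (hf : IsTwoColoringOn adj S f) (hg : IsTwoColoringOn adj S g) (hS : connOn adj S)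
    {x y : U} (hx : x ∈ S) (hy : y ∈ S) : f x = f y ↔ g x = g y := by
  induction hS x hx y hy with
  | refl => simp
  | tail _ hpq ih =>
    obtain ⟨hp, hq, hpq⟩ := hpq
    rw [Bool.eq_not_of_ne (hf _ hp _ hq hpq).symm, Bool.eq_not_of_ne (hg _ hp _ hq hpq).symm,
      Bool.eq_not, Bool.eq_not]
    exact not_congr (ih hp)

lemma indep_nbr_inter_of_isTwoColoringOn {B S : Set U} {f : U → Bool}
    (hf : IsTwoColoringOn adj S f) (hBS : B ⊆ S) (hB : ∀ x ∈ B, ∀ y ∈ B, f x = f y) :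
    indep adj (nbr adj B ∩ S) := by
  rintro a ⟨⟨u, hu, hua⟩, ha⟩ b ⟨⟨u', hu', hu'b⟩, hb⟩ hab
  have hfa : f a = !f u := Bool.eq_not_of_ne (hf u (hBS hu) a ha hua).symm
  have hfb : f b = !f u' := Bool.eq_not_of_ne (hf u' (hBS hu') b hb hu'b).symm
  exact hf a ha b hb hab (by rw [hfa, hfb, hB u hu u' hu'])

end Graph

theorem stmt8_general {U : Type*} (adj : U → U → Prop)
    (hsym : Symmetric adj) (U0 U1 U2 : Set U)
    (hi0 : indep adj U0) (hi1 : indep adj U1)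
    (h10 : U0 ⊆ nbr adj U1)
    (h20 : U0 ⊆ nbr adj U2) (h21 : U1 ⊆ nbr adj U2)
    (hconn : connOn adj (U0 ∪ U1))
    (hbip : ∀ S : Set U, NbrInter adj U0 U1 U2 S → S ≠ Set.univ →
      ∃ f : U → Bool, ∀ a ∈ S, ∀ b ∈ S, adj a b → f a ≠ f b)
    (hU2 : nbr adj U2 ≠ Set.univ) :
    U0 ⊆ nbr adj U1 ∩ nbr adj U2 ∧
      (∀ v ∈ nbr adj U1 ∩ nbr adj U2, ∃ u ∈ U1, adj v u) ∧
      connOn adj ((nbr adj U1 ∩ nbr adj U2) ∪ U1) ∧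
      indep adj (nbr adj U1 ∩ nbr adj U2) := by
  classical
  have hU0 : U0 ⊆ nbr adj U1 ∩ nbr adj U2 := Set.subset_inter h10 h20
  refine ⟨hU0, fun v ⟨⟨u, hu, huv⟩, _⟩ => ⟨u, hu, hsym huv⟩, ?_, ?_⟩
  · refine connOn_of_subset_union_nbr hsym hconn (Set.union_subset_union_left _ hU0) ?_
    exact Set.union_subset
      (Set.inter_subset_left.trans ((nbr_mono Set.subset_union_right).trans Set.subset_union_right))
      (Set.subset_union_right.trans Set.subset_union_left)
  · obtain ⟨f, hf⟩ := hbip _ .n2 hU2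
    have hf' : IsTwoColoringOn adj (U0 ∪ U1) f := IsTwoColoringOn.mono hf (Set.union_subset h20 h21)
    have hg := isTwoColoringOn_union_of_indep hi0 hi1 (disjoint_of_subset_nbr_of_indep h10 hi1)
    refine indep_nbr_inter_of_isTwoColoringOn hf h21 fun x hx y hy => ?_
    exact (hf'.eq_iff_eq_of_connOn hg hconn (.inr hx) (.inr hy)).2 (by simp [hx, hy])

/-- The blow-up lemma (case `i = 0`): blowing up `U₀` to
`U₀' = U₁^— ∩ U₂^—` preserves the strong configuration conditions. -/
theorem stmt8 {U : Type*} [Fintype U] (adj : U → U → Prop)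
    (hsym : Symmetric adj) (U0 U1 U2 : Set U)
    (hi0 : indep adj U0) (hi1 : indep adj U1) (hi2 : indep adj U2)
    (h01 : U1 ⊆ nbr adj U0) (h02 : U2 ⊆ nbr adj U0)
    (h10 : U0 ⊆ nbr adj U1) (h12 : U2 ⊆ nbr adj U1)
    (h20 : U0 ⊆ nbr adj U2) (h21 : U1 ⊆ nbr adj U2)
    (hconn : connOn adj (U0 ∪ U1))
    (hbip : ∀ S : Set U, NbrInter adj U0 U1 U2 S → S ≠ Set.univ →
      ∃ f : U → Bool, ∀ a ∈ S, ∀ b ∈ S, adj a b → f a ≠ f b)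
    (hU2 : nbr adj U2 ≠ Set.univ) :
    U0 ⊆ nbr adj U1 ∩ nbr adj U2 ∧
      (∀ v ∈ nbr adj U1 ∩ nbr adj U2, ∃ u ∈ U1, adj v u) ∧
      connOn adj ((nbr adj U1 ∩ nbr adj U2) ∪ U1) ∧
      indep adj (nbr adj U1 ∩ nbr adj U2) :=
  stmt8_general adj hsym U0 U1 U2 hi0 hi1 h10 h20 h21 hconn hbip hU2
end

section
/- Let (A, →) be a smooth digraph all of whose weak components are finite, let G ≤ Aut(A, →), and suppose the quotient digraph A/G has a closed walk of algebraic length 1. Then there exist a, b ∈ A in the same G-orbit and a walk from a to b in (A, →) of algebraic length 1. -/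
/-!
Walks in the quotient lift to walks in `A` with the same algebraic length: an edge
`[u] → [v]` of `A/G` is the image of some edge `u' → v'`, and translating it by an
element of `G` makes it start (or end) at any prescribed point of the orbit `[u]`
(or `[v]`). Lifting the closed walk `[a] ⇝ [a]` from `a` therefore ends at a point
of the orbit of `a`.
-/

/-- One step of a walk carrying the running algebraic length. -/
def algStep {A : Type*} (r : A → A → Prop) : A × ℤ → A × ℤ → Prop :=
  fun p q => (r p.1 q.1 ∧ q.2 = p.2 + 1) ∨ (r q.1 p.1 ∧ q.2 = p.2 - 1)

/-- Membership in the same orbit of a permutation group. -/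
def sameOrbit {A : Type*} (G : Subgroup (Equiv.Perm A)) (a b : A) : Prop :=
  ∃ g ∈ G, g a = b

/-- The edge relation of the quotient digraph by the orbit equivalence,
expressed on representatives. -/
def qArr {A : Type*} (arr : A → A → Prop) (G : Subgroup (Equiv.Perm A))
    (a b : A) : Prop :=
  ∃ a' b', sameOrbit G a a' ∧ sameOrbit G b b' ∧ arr a' b'

section SameOrbit

variable {A : Type*} {G : Subgroup (Equiv.Perm A)}

lemma sameOrbit_refl (a : A) : sameOrbit G a a := ⟨1, G.one_mem, rfl⟩

lemma sameOrbit.symm {a b : A} (h : sameOrbit G a b) : sameOrbit G b a := by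
  obtain ⟨g, hg, rfl⟩ := h
  exact ⟨g⁻¹, G.inv_mem hg, by simp⟩

lemma sameOrbit.trans {a b c : A} (hab : sameOrbit G a b) (hbc : sameOrbit G b c) :
    sameOrbit G a c := by
  obtain ⟨g, hg, rfl⟩ := hab
  obtain ⟨h, hh, rfl⟩ := hbc
  exact ⟨h * g, G.mul_mem hh hg, rfl⟩

end SameOrbit

section Lifting

variable {A : Type*} {arr : A → A → Prop} {G : Subgroup (Equiv.Perm A)}

lemma qArr.exists_lift_of_source (hG : ∀ g ∈ G, ∀ x y, arr x y ↔ arr (g x) (g y))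
    {u v x : A} (huv : qArr arr G u v) (hux : sameOrbit G u x) :
    ∃ y, sameOrbit G v y ∧ arr x y := by
  obtain ⟨u', v', hu', hv', harr⟩ := huv
  obtain ⟨g, hg, rfl⟩ := hu'.symm.trans hux
  exact ⟨g v', hv'.trans ⟨g, hg, rfl⟩, (hG g hg u' v').mp harr⟩

lemma qArr.exists_lift_of_target (hG : ∀ g ∈ G, ∀ x y, arr x y ↔ arr (g x) (g y))
    {u v y : A} (huv : qArr arr G u v) (hvy : sameOrbit G v y) :
    ∃ x, sameOrbit G u x ∧ arr x y := by
  obtain ⟨u', v', hu', hv', harr⟩ := huv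
  obtain ⟨g, hg, rfl⟩ := hv'.symm.trans hvy
  exact ⟨g u', hu'.trans ⟨g, hg, rfl⟩, (hG g hg u' v').mp harr⟩

lemma exists_lift_algStep_qArr (hG : ∀ g ∈ G, ∀ x y, arr x y ↔ arr (g x) (g y))
    {p q : A × ℤ} (hpq : algStep (qArr arr G) p q) {x : A} (hx : sameOrbit G p.1 x) :
    ∃ y, sameOrbit G q.1 y ∧ algStep arr (x, p.2) (y, q.2) := by
  rcases hpq with ⟨hfwd, hlen⟩ | ⟨hbwd, hlen⟩
  · obtain ⟨y, hy, harr⟩ := hfwd.exists_lift_of_source hG hx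
    exact ⟨y, hy, Or.inl ⟨harr, hlen⟩⟩
  · obtain ⟨y, hy, harr⟩ := hbwd.exists_lift_of_target hG hx
    exact ⟨y, hy, Or.inr ⟨harr, hlen⟩⟩

lemma exists_lift_reflTransGen_algStep_qArr
    (hG : ∀ g ∈ G, ∀ x y, arr x y ↔ arr (g x) (g y))
    {p q : A × ℤ} (hpq : Relation.ReflTransGen (algStep (qArr arr G)) p q)
    {x : A} (hx : sameOrbit G p.1 x) :
    ∃ y, sameOrbit G q.1 y ∧ Relation.ReflTransGen (algStep arr) (x, p.2) (y, q.2) := by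
  induction hpq with
  | refl => exact ⟨x, hx, .refl⟩
  | tail _ hstep ih =>
    obtain ⟨y, hy, hwalk⟩ := ih
    obtain ⟨z, hz, hlast⟩ := exists_lift_algStep_qArr hG hstep hy
    exact ⟨z, hz, hwalk.tail hlast⟩

end Lifting

theorem stmt10_general {A : Type*} (arr : A → A → Prop)
    (G : Subgroup (Equiv.Perm A))
    (hG : ∀ g ∈ G, ∀ x y, arr x y ↔ arr (g x) (g y))
    (hq : ∃ a b : A, sameOrbit G a b ∧
      Relation.ReflTransGen (algStep (qArr arr G)) (a, (0 : ℤ)) (b, 1)) :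
    ∃ a b : A, sameOrbit G a b ∧
      Relation.ReflTransGen (algStep arr) (a, (0 : ℤ)) (b, 1) := by
  obtain ⟨a, b, hab, hwalk⟩ := hq
  obtain ⟨y, hby, hlift⟩ := exists_lift_reflTransGen_algStep_qArr hG hwalk (sameOrbit_refl a)
  exact ⟨a, y, hab.trans hby, hlift⟩

/-- In a smooth digraph with finite weak components, if the quotient by a group
of automorphisms has a closed walk of algebraic length 1, then there are two
vertices in the same orbit joined by a walk of algebraic length 1. -/
theorem stmt10 {A : Type*} (arr : A → A → Prop)
    (hsm1 : ∀ a, ∃ b, arr a b) (hsm2 : ∀ a, ∃ b, arr b a)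
    (G : Subgroup (Equiv.Perm A))
    (hG : ∀ g ∈ G, ∀ x y, arr x y ↔ arr (g x) (g y))
    (hfin : ∀ a : A,
      {b | Relation.ReflTransGen (fun u v => arr u v ∨ arr v u) a b}.Finite)
    (hq : ∃ a b : A, sameOrbit G a b ∧
      Relation.ReflTransGen (algStep (qArr arr G)) (a, (0 : ℤ)) (b, 1)) :
    ∃ a b : A, sameOrbit G a b ∧
      Relation.ReflTransGen (algStep arr) (a, (0 : ℤ)) (b, 1) :=
  stmt10_general arr G hG hq
end

section
/- Let A be a finite set, B' ⊆ A, and (A,→) a digraph. Define B := {x ∈ B' : there exist x₁,...,x_{|B'|}, x'₁,...,x'_{|B'|} ∈ B' with x₁ → x₂ → ... → x_{|B'|} → x → x'₁ → ... → x'_{|B'|}}. Then B is the largest subset of B' on which the induced digraph is smooth (every vertex has an in- and out-neighbor within B). -/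
/-!
Let `n = |B'|` and let `t k ⊆ B'` be the set of vertices starting a walk of length `k` inside `B'`.
The sets `t k` decrease, and `t (k + 1)` is determined by `t k`; so once two consecutive ones agree
the sequence is constant, and since `|t 0| = n` this has happened by step `n`. Hence a vertex with
an outgoing walk of length `n` has one of length `n + 1`, whose second vertex again has outgoing
walks of length `n` and (through the first vertex) incoming ones: this gives out-neighbours in `B`,
and in-neighbours by reversing the arrows. Conversely, in a smooth `C ⊆ B'` every vertex starts and
ends walks of every length inside `C`.
-/

/-- `k`-fold relational composition (with `relPow r 0 = Eq`). -/
def relPow {A : Type*} (r : A → A → Prop) : ℕ → A → A → Prop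
  | 0 => Eq
  | n + 1 => fun x z => ∃ y, r x y ∧ relPow r n y z

theorem Set.eq_succ_ncard_of_antitone {α : Type*} {t : ℕ → Set α} (ht : Antitone t)
    (h0 : (t 0).Finite) (hstep : ∀ k, t k = t (k + 1) → t (k + 1) = t (k + 2)) :
    t (t 0).ncard = t ((t 0).ncard + 1) := by
  obtain ⟨k, hk, hkeq⟩ : ∃ k ≤ (t 0).ncard, t k = t (k + 1) := by
    by_contra! hne
    have hcard : ∀ k ≤ (t 0).ncard + 1, (t k).ncard + k ≤ (t 0).ncard := by
      intro k
      induction k with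
      | zero => simp
      | succ k ih =>
        intro hk
        have hlt : (t (k + 1)).ncard < (t k).ncard :=
          Set.ncard_lt_ncard ((ht k.le_succ).ssubset_of_ne (hne k (by omega)).symm)
            (h0.subset (ht k.zero_le))
        have := ih (by omega)
        omega
    have := hcard _ le_rfl
    omega
  have hstable : ∀ m, k ≤ m → t m = t (m + 1) := fun m hm => by
    induction m, hm using Nat.le_induction with
    | base => exact hkeq
    | succ m _ ih => exact hstep m ih
  exact hstable _ hk

namespace relPow

variable {A : Type*} {r : A → A → Prop}

theorem add {a b : ℕ} {x z : A} :
    relPow r (a + b) x z ↔ ∃ y, relPow r a x y ∧ relPow r b y z := by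
  induction a generalizing x with
  | zero => simp [relPow]
  | succ a ih =>
    rw [Nat.add_right_comm]
    simp only [relPow, ih]
    exact ⟨fun ⟨w, hw, y, h₁, h₂⟩ => ⟨y, ⟨w, hw, h₁⟩, h₂⟩,
      fun ⟨y, ⟨w, hw, h₁⟩, h₂⟩ => ⟨w, hw, y, h₁, h₂⟩⟩

theorem one {x y : A} : relPow r 1 x y ↔ r x y := by
  simp [relPow]

theorem succ' {n : ℕ} {x z : A} : relPow r (n + 1) x z ↔ ∃ y, relPow r n x y ∧ r y z := by
  simp only [add, one]

theorem flip {n : ℕ} {x z : A} : relPow (flip r) n x z ↔ relPow r n z x := by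
  induction n generalizing z with
  | zero => exact eq_comm
  | succ n ih =>
    rw [succ', relPow]
    simp only [ih]
    exact exists_congr fun _ => and_comm

theorem exists_of_forall_exists {C : Set A} (hC : ∀ x ∈ C, ∃ y ∈ C, r x y) (k : ℕ) {x : A}
    (hx : x ∈ C) : ∃ z, relPow r k x z := by
  induction k generalizing x with
  | zero => exact ⟨x, rfl⟩
  | succ k ih =>
    obtain ⟨y, hy, hxy⟩ := hC x hx
    obtain ⟨z, hz⟩ := ih hy
    exact ⟨z, y, hxy, hz⟩

theorem exists_succ_ncard {S : Set A} (hS : S.Finite)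
    (hr : ∀ x y, r x y → x ∈ S ∧ y ∈ S) {x z : A} (hx : x ∈ S) (h : relPow r S.ncard x z) :
    ∃ w, relPow r (S.ncard + 1) x w := by
  set t : ℕ → Set A := fun k => {x | ∃ z, relPow r k x z} ∩ S with ht
  have mem_succ : ∀ k x, x ∈ t (k + 1) ↔ ∃ y, r x y ∧ y ∈ t k := fun k x =>
    ⟨fun ⟨⟨z, y, hxy, hyz⟩, _⟩ => ⟨y, hxy, ⟨z, hyz⟩, (hr x y hxy).2⟩,
      fun ⟨y, hxy, ⟨z, hyz⟩, _⟩ => ⟨⟨z, y, hxy, hyz⟩, (hr x y hxy).1⟩⟩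
  have hanti : Antitone t := antitone_nat_of_succ_le fun k x ⟨⟨z, hz⟩, hxS⟩ => by
    obtain ⟨w, hw, -⟩ := succ'.1 hz
    exact ⟨⟨w, hw⟩, hxS⟩
  have ht0 : t 0 = S := by ext y; simp [ht, relPow]
  have hstable := Set.eq_succ_ncard_of_antitone hanti (ht0 ▸ hS) fun k hk => by
    ext y; rw [mem_succ, mem_succ, hk]
  rw [ht0] at hstable
  have hxt : x ∈ t S.ncard := ⟨⟨z, h⟩, hx⟩
  rw [hstable] at hxt
  exact hxt.1

theorem exists_out_neighbour {S : Set A} (hS : S.Finite)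
    (hr : ∀ x y, r x y → x ∈ S ∧ y ∈ S) {x : A} (hx : x ∈ S)
    (hin : ∃ z, relPow r S.ncard z x) (hout : ∃ z, relPow r S.ncard x z) :
    ∃ y, r x y ∧ (∃ z, relPow r S.ncard z y) ∧ (∃ z, relPow r S.ncard y z) := by
  obtain ⟨u, hu⟩ := hin
  obtain ⟨w, hw⟩ := hout
  obtain ⟨w', y, hxy, hyw'⟩ := exists_succ_ncard hS hr hx hw
  have huy : relPow r (1 + S.ncard) u y := by
    rw [add_comm]; exact succ'.2 ⟨x, hu, hxy⟩
  obtain ⟨v, -, hvy⟩ := add.1 huy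
  exact ⟨y, hxy, ⟨v, hvy⟩, ⟨w', hyw'⟩⟩

end relPow

/-- The set of elements of `B'` admitting incoming and outgoing walks of length
`|B'|` within `B'` is the largest subset of `B'` inducing a smooth digraph. -/
theorem stmt13 {A : Type*} [Fintype A] (arr : A → A → Prop) (B' : Set A) :
    let n := B'.ncard
    let rB := fun x y => x ∈ B' ∧ y ∈ B' ∧ arr x y
    let B := {x | x ∈ B' ∧ (∃ z, relPow rB n z x) ∧ (∃ z, relPow rB n x z)}
    (∀ x ∈ B, (∃ y ∈ B, arr x y) ∧ (∃ y ∈ B, arr y x)) ∧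
      (∀ C ⊆ B', (∀ x ∈ C, (∃ y ∈ C, arr x y) ∧ (∃ y ∈ C, arr y x)) → C ⊆ B) := by
  intro n rB B
  have hr : ∀ x y, rB x y → x ∈ B' ∧ y ∈ B' := fun x y h => ⟨h.1, h.2.1⟩
  refine ⟨fun x ⟨hx, hin, hout⟩ => ⟨?_, ?_⟩, fun C hCB' hC x hx => ⟨hCB' hx, ?_, ?_⟩⟩
  · obtain ⟨y, hxy, hyin, hyout⟩ := relPow.exists_out_neighbour B'.toFinite hr hx hin hout
    exact ⟨y, ⟨hxy.2.1, hyin, hyout⟩, hxy.2.2⟩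
  · obtain ⟨y, hyx, hyout, hyin⟩ := relPow.exists_out_neighbour B'.toFinite
      (fun x y h => (hr y x h).symm) hx (hout.imp fun _ => relPow.flip.2)
      (hin.imp fun _ => relPow.flip.2)
    exact ⟨y, ⟨hyx.1, hyin.imp fun _ => relPow.flip.1, hyout.imp fun _ => relPow.flip.1⟩,
      hyx.2.2⟩
  · have hCin : ∀ x ∈ C, ∃ y ∈ C, flip rB x y := fun x hx =>
      (hC x hx).2.imp fun y ⟨hy, hyx⟩ => ⟨hy, hCB' hy, hCB' hx, hyx⟩
    exact (relPow.exists_of_forall_exists hCin n hx).imp fun _ => relPow.flip.1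
  · have hCout : ∀ x ∈ C, ∃ y ∈ C, rB x y := fun x hx =>
      (hC x hx).1.imp fun y ⟨hy, hxy⟩ => ⟨hy, hCB' hx, hCB' hy, hxy⟩
    exact relPow.exists_of_forall_exists hCout n hx
end

section
/- Let 𝒞 be the class of finite structures in signature σ = {∼, P₁,...,Pₙ} ∪ {Rᵏ : R relation of a fixed finite structure 𝔄 on {1,...,n}} defined by: ∼ is an equivalence relation on the set of k-tuples with pairwise distinct entries, with classes P₁,...,Pₙ, and Rᵏ holds of (b¹,...,bʳ) iff all bⁱ are injective k-tuples and the tuple of their ∼-classes is in R. Then 𝒞 is closed under substructures and has the strong amalgamation property. -/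
/-!
A structure of the class is determined by how its injective `k`-tuples are distributed among the
classes `P₁, …, Pₙ`. Substructures inherit this distribution. For amalgamation, glue `C₁` and
`C₂ ∖ f₂(B)` into a set `D` and give a tuple of `D` the class it has in `C₁` or in `C₂`: the two
prescriptions can only conflict on a tuple lying in both images, and by strong amalgamation of the
underlying sets such a tuple comes from `B`, where `hq₁` and `hq₂` make them agree.
-/

open Function Set

theorem exists_strong_amalgamation {B C₁ C₂ : Type} [Finite C₁] [Finite C₂]
    {f₁ : B → C₁} {f₂ : B → C₂} (hf₁ : Injective f₁) (hf₂ : Injective f₂) :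
    ∃ (D : Type) (_ : Finite D) (e₁ : C₁ → D) (e₂ : C₂ → D), Injective e₁ ∧ Injective e₂ ∧
      e₁ ∘ f₁ = e₂ ∘ f₂ ∧ range e₁ ∩ range e₂ = range (e₁ ∘ f₁) := by
  classical
  let e₂ : C₂ → C₁ ⊕ ↥(range f₂)ᶜ :=
    Sum.map (f₁ ∘ (Equiv.ofInjective f₂ hf₂).symm) id ∘ (Equiv.Set.sumCompl (range f₂)).symm
  have he₂_apply : ∀ b, e₂ (f₂ b) = Sum.inl (f₁ b) := fun b => by
    simp [e₂, Equiv.Set.sumCompl_symm_apply_of_mem (mem_range_self b)]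
  have hcomm : Sum.inl ∘ f₁ = e₂ ∘ f₂ := funext fun b => (he₂_apply b).symm
  refine ⟨_, inferInstance, Sum.inl, e₂, Sum.inl_injective, ?_, hcomm, ?_⟩
  · exact (Sum.map_injective.2 ⟨hf₁.comp (Equiv.injective _), injective_id⟩).comp
      (Equiv.injective _)
  refine Subset.antisymm ?_ fun _ ⟨b, hb⟩ => ⟨⟨f₁ b, hb⟩, f₂ b, (he₂_apply b).trans hb⟩
  rintro _ ⟨⟨a, rfl⟩, c, hc⟩
  by_cases hmem : c ∈ range f₂
  · obtain ⟨b, rfl⟩ := hmem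
    exact ⟨b, (he₂_apply b).symm.trans hc⟩
  · simp [e₂, Equiv.Set.sumCompl_symm_apply_of_notMem hmem] at hc

theorem exists_eq_comp_of_comp_eq {B C₁ C₂ D : Type*} {f₁ : B → C₁} {f₂ : B → C₂}
    {e₁ : C₁ → D} {e₂ : C₂ → D}
    (he₁ : Injective e₁) (he₂ : Injective e₂) (hcomm : e₁ ∘ f₁ = e₂ ∘ f₂)
    (hrange : range e₁ ∩ range e₂ ⊆ range (e₁ ∘ f₁)) {ι : Type*} {s : ι → C₁} {t : ι → C₂}
    (hst : e₁ ∘ s = e₂ ∘ t) : ∃ u : ι → B, s = f₁ ∘ u ∧ t = f₂ ∘ u := by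
  have hlift : ∀ i, ∃ b, f₁ b = s i ∧ f₂ b = t i := fun i => by
    obtain ⟨b, hb⟩ := hrange ⟨⟨s i, rfl⟩, t i, (congrFun hst i).symm⟩
    exact ⟨b, he₁ hb, he₂ ((congrFun hcomm b).symm.trans (hb.trans (congrFun hst i)))⟩
  choose u hu using hlift
  exact ⟨u, funext fun i => (hu i).1.symm, funext fun i => (hu i).2.symm⟩

theorem exists_coloring_of_strong_amalgamation {B C₁ C₂ D ι N : Type*} [Nonempty N]
    {f₁ : B → C₁} {f₂ : B → C₂} {e₁ : C₁ → D} {e₂ : C₂ → D}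
    (he₁ : Injective e₁) (he₂ : Injective e₂) (hcomm : e₁ ∘ f₁ = e₂ ∘ f₂)
    (hrange : range e₁ ∩ range e₂ ⊆ range (e₁ ∘ f₁))
    (qB : (ι → B) → N) (q₁ : (ι → C₁) → N) (q₂ : (ι → C₂) → N)
    (hq₁ : ∀ t : ι → B, Injective t → q₁ (f₁ ∘ t) = qB t)
    (hq₂ : ∀ t : ι → B, Injective t → q₂ (f₂ ∘ t) = qB t) :
    ∃ qD : (ι → D) → N, (∀ t, qD (e₁ ∘ t) = q₁ t) ∧
      ∀ t : ι → C₂, Injective t → qD (e₂ ∘ t) = q₂ t := by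
  refine ⟨extend (e₁ ∘ ·) q₁ (extend (e₂ ∘ ·) q₂ fun _ => Classical.arbitrary N),
    he₁.comp_left.extend_apply _ _, fun t ht => ?_⟩
  by_cases hfrom₁ : ∃ s, e₁ ∘ s = e₂ ∘ t
  · obtain ⟨s, hst⟩ := hfrom₁
    obtain ⟨u, rfl, rfl⟩ := exists_eq_comp_of_comp_eq he₁ he₂ hcomm hrange hst
    have hu : Injective u := ht.of_comp
    rw [← hst, he₁.comp_left.extend_apply, hq₁ u hu, hq₂ u hu]
  · rw [extend_apply' _ _ _ hfrom₁, he₂.comp_left.extend_apply]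

theorem stmt18_general (k n : ℕ) (hn : 0 < n)
    {B C₁ C₂ : Type} [Finite C₁] [Finite C₂]
    (qB : (Fin k → B) → Fin n) (q₁ : (Fin k → C₁) → Fin n)
    (q₂ : (Fin k → C₂) → Fin n)
    (f₁ : B → C₁) (f₂ : B → C₂)
    (hf₁ : Function.Injective f₁) (hf₂ : Function.Injective f₂)
    (hq₁ : ∀ t : Fin k → B, Function.Injective t → q₁ (f₁ ∘ t) = qB t)
    (hq₂ : ∀ t : Fin k → B, Function.Injective t → q₂ (f₂ ∘ t) = qB t) :
    -- closure under substructures: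
    (∀ S : Set C₁, ∃ qS : (Fin k → S) → Fin n,
      ∀ t : Fin k → S, Function.Injective t → q₁ ((↑) ∘ t) = qS t) ∧
    -- strong amalgamation:
    ∃ (D : Type) (_ : Finite D) (qD : (Fin k → D) → Fin n)
      (e₁ : C₁ → D) (e₂ : C₂ → D),
      Function.Injective e₁ ∧ Function.Injective e₂ ∧
      (∀ t : Fin k → C₁, Function.Injective t → qD (e₁ ∘ t) = q₁ t) ∧
      (∀ t : Fin k → C₂, Function.Injective t → qD (e₂ ∘ t) = q₂ t) ∧
      e₁ ∘ f₁ = e₂ ∘ f₂ ∧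
      Set.range e₁ ∩ Set.range e₂ = Set.range (e₁ ∘ f₁) := by
  refine ⟨fun S => ⟨fun t => q₁ ((↑) ∘ t), fun _ _ => rfl⟩, ?_⟩
  obtain ⟨D, hD, e₁, e₂, he₁, he₂, hcomm, hrange⟩ := exists_strong_amalgamation hf₁ hf₂
  have : Nonempty (Fin n) := ⟨⟨0, hn⟩⟩
  obtain ⟨qD, hqD₁, hqD₂⟩ := exists_coloring_of_strong_amalgamation he₁ he₂ hcomm hrange.subset
    qB q₁ q₂ hq₁ hq₂
  exact ⟨D, hD, qD, e₁, e₂, he₁, he₂, fun t _ => hqD₁ t, hqD₂, hcomm, hrange⟩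

/-- The class `𝒞(𝔄,k)` is closed under substructures and has strong
amalgamation. Structures in `𝒞(𝔄,k)` are uniquely determined by the partition
of the injective `k`-tuples into the classes `P₁, …, Pₙ`, so we encode a member
of the class on a finite domain `B` as a map `q : (Fin k → B) → Fin n` (only
its values on injective tuples matter), and embeddings as injections preserving
`q` on injective tuples. -/
theorem stmt18 (k n : ℕ) (hk : 2 ≤ k) (hn : 0 < n)
    {B C₁ C₂ : Type} [Finite B] [Finite C₁] [Finite C₂]
    (qB : (Fin k → B) → Fin n) (q₁ : (Fin k → C₁) → Fin n)
    (q₂ : (Fin k → C₂) → Fin n)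
    (f₁ : B → C₁) (f₂ : B → C₂)
    (hf₁ : Function.Injective f₁) (hf₂ : Function.Injective f₂)
    (hq₁ : ∀ t : Fin k → B, Function.Injective t → q₁ (f₁ ∘ t) = qB t)
    (hq₂ : ∀ t : Fin k → B, Function.Injective t → q₂ (f₂ ∘ t) = qB t) :
    -- closure under substructures:
    (∀ S : Set C₁, ∃ qS : (Fin k → S) → Fin n,
      ∀ t : Fin k → S, Function.Injective t → q₁ ((↑) ∘ t) = qS t) ∧
    -- strong amalgamation:
    ∃ (D : Type) (_ : Finite D) (qD : (Fin k → D) → Fin n)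
      (e₁ : C₁ → D) (e₂ : C₂ → D),
      Function.Injective e₁ ∧ Function.Injective e₂ ∧
      (∀ t : Fin k → C₁, Function.Injective t → qD (e₁ ∘ t) = q₁ t) ∧
      (∀ t : Fin k → C₂, Function.Injective t → qD (e₂ ∘ t) = q₂ t) ∧
      e₁ ∘ f₁ = e₂ ∘ f₂ ∧
      Set.range e₁ ∩ Set.range e₂ = Set.range (e₁ ∘ f₁) :=
  stmt18_general k n hn qB q₁ q₂ f₁ f₂ hf₁ hf₂ hq₁ hq₂
end

section
/- Let (U, —) be a finite loopless graph and let k be the length of its shortest odd cycle (U non-bipartite). Then the graph (U, —^{k-2}), where —^{k-2} is the (k−2)-fold composition of the symmetric relation —, is non-bipartite, loopless, and contains a triangle (three pairwise adjacent vertices). -/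
section RelPow

variable {A : Type*} {r : A → A → Prop}

lemma relPow_succ_of_relPow_of_rel {n : ℕ} {x y z : A} (h : relPow r n x y) (hyz : r y z) :
    relPow r (n + 1) x z := by
  induction n generalizing x with
  | zero => exact h ▸ ⟨z, hyz, rfl⟩
  | succ n ih =>
    obtain ⟨a, hxa, ha⟩ := h
    exact ⟨a, hxa, ih ha⟩

lemma relPow_symm (hs : Symmetric r) {n : ℕ} {x y : A} (h : relPow r n x y) :
    relPow r n y x := by
  induction n generalizing x y with
  | zero => exact h.symm
  | succ n ih =>
    obtain ⟨a, hxa, ha⟩ := h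
    exact relPow_succ_of_relPow_of_rel (ih ha) (hs hxa)

lemma relPow_of_rel_of_odd (hs : Symmetric r) {x y : A} (hxy : r x y) {n : ℕ} (hn : Odd n) :
    relPow r n x y := by
  obtain ⟨t, rfl⟩ := hn
  induction t with
  | zero => exact ⟨y, hxy, rfl⟩
  | succ t ih => exact ⟨y, hxy, x, hs hxy, ih⟩

end RelPow

lemma not_exists_two_coloring_of_triangle {A : Type*} {s : A → A → Prop} {a b c : A}
    (hab : s a b) (hbc : s b c) (hac : s a c) :
    ¬ ∃ f : A → Bool, ∀ x y, s x y → f x ≠ f y := by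
  rintro ⟨f, hf⟩
  have hfab := hf a b hab
  have hfbc := hf b c hbc
  have hfac := hf a c hac
  revert hfab hfbc hfac
  cases f a <;> cases f b <;> cases f c <;> decide

theorem stmt19_general {U : Type*} (adj : U → U → Prop)
    (hsym : Symmetric adj) (hloop : ∀ u, ¬ adj u u)
    (k : ℕ) (hodd : Odd k)
    (hcyc : ∃ u, relPow adj k u u)
    (hmin : ∀ m, Odd m → (∃ u, relPow adj m u u) → k ≤ m) :
    (∀ u, ¬ relPow adj (k - 2) u u) ∧
      (¬ ∃ f : U → Bool, ∀ a b, relPow adj (k - 2) a b → f a ≠ f b) ∧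
      (∃ a b c : U, a ≠ b ∧ a ≠ c ∧ b ≠ c ∧
        relPow adj (k - 2) a b ∧ relPow adj (k - 2) b c ∧
        relPow adj (k - 2) a c) := by
  obtain ⟨u, hu⟩ := hcyc
  have hk : k ≠ 1 := by
    rintro rfl
    obtain ⟨_, hux, rfl⟩ := hu
    exact hloop _ hux
  obtain ⟨t, rfl⟩ : ∃ t, k = 2 * t + 1 + 2 := by
    obtain ⟨m, rfl⟩ := hodd
    exact ⟨m - 1, by omega⟩
  simp only [Nat.add_sub_cancel]
  have hoddt : Odd (2 * t + 1) := odd_two_mul_add_one t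
  have hloopless : ∀ v, ¬ relPow adj (2 * t + 1) v v := fun v hv => by
    have := hmin _ hoddt ⟨v, hv⟩
    omega
  obtain ⟨x₁, hux₁, x₂, hx₁₂, hx₂u⟩ := hu
  have e₀₁ := relPow_of_rel_of_odd hsym hux₁ hoddt
  have e₁₂ := relPow_of_rel_of_odd hsym hx₁₂ hoddt
  have e₀₂ := relPow_symm hsym hx₂u
  refine ⟨hloopless, not_exists_two_coloring_of_triangle e₀₁ e₁₂ e₀₂,
    u, x₁, x₂, ?_, ?_, ?_, e₀₁, e₁₂, e₀₂⟩
  · exact fun h => hloop u (h ▸ hux₁)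
  · exact fun h => hloopless u (h ▸ e₀₂)
  · exact fun h => hloop x₁ (h ▸ hx₁₂)

/-- If `k` is the length of a shortest odd cycle of a finite loopless graph,
then the `(k-2)`-fold composition of the edge relation is loopless,
non-bipartite, and contains a triangle. -/
theorem stmt19 {U : Type*} [Fintype U] (adj : U → U → Prop)
    (hsym : Symmetric adj) (hloop : ∀ u, ¬ adj u u)
    (k : ℕ) (hodd : Odd k)
    (hcyc : ∃ u, relPow adj k u u)
    (hmin : ∀ m, Odd m → (∃ u, relPow adj m u u) → k ≤ m) :
    (∀ u, ¬ relPow adj (k - 2) u u) ∧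
      (¬ ∃ f : U → Bool, ∀ a b, relPow adj (k - 2) a b → f a ≠ f b) ∧
      (∃ a b c : U, a ≠ b ∧ a ≠ c ∧ b ≠ c ∧
        relPow adj (k - 2) a b ∧ relPow adj (k - 2) b c ∧
        relPow adj (k - 2) a c) :=
  stmt19_general adj hsym hloop k hodd hcyc hmin
end
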